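/- Let G be a finite group, K a core-free maximal subgroup, and H a nontrivial nilpotent normal subgroup of G with H ⊄ K. Then G = Z(H)K and Z(H) ∩ K = {1}, i.e., the center Z(H) is a normal complement to K in G. -/

import Mathlib

/-!
Write `Z` for the image of `Z(H)` in `G`. It is normal in `G` (being characteristic in `H`) and
nontrivial (as `H` is nilpotent), so it is not contained in the core-free subgroup `K`; maximality
of `K` then gives `ZK = G`. The intersection `Z ∩ K` is normalised by `K` (as `Z` is normal) and
centralised by `Z` (as `Z` is abelian), hence normal in `ZK = G`, so it lies in the core of `K`.
-/

open scoped Pointwise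

namespace Subgroup

variable {G : Type*} [Group G] {K N : Subgroup G}

theorem eq_bot_of_le_of_normalCore_eq_bot [N.Normal] (hcf : K.normalCore = ⊥) (hNK : N ≤ K) :
    N = ⊥ :=
  le_bot_iff.mp (hcf ▸ normal_le_normalCore.mpr hNK)

theorem sup_eq_top_of_isCoatom_of_normalCore_eq_bot [N.Normal] (hmax : IsCoatom K)
    (hcf : K.normalCore = ⊥) (hN : N ≠ ⊥) : N ⊔ K = ⊤ := by
  have hNK : ¬N ≤ K := fun h ↦ hN (eq_bot_of_le_of_normalCore_eq_bot hcf h)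
  rw [sup_comm]
  exact hmax.2 _ (left_lt_sup.mpr hNK)

theorem normal_inf_of_sup_eq_top [N.Normal] [IsMulCommutative N] (hsup : N ⊔ K = ⊤) :
    (N ⊓ K).Normal := by
  have hN : N ≤ normalizer (N ⊓ K : Set G) :=
    (le_centralizer N).trans <|
      (centralizer_le inf_le_left).trans (centralizer_le_normalizer _)
  have hK : K ≤ normalizer (N ⊓ K : Set G) :=
    (le_inf le_normalizer_of_normal le_normalizer).trans inf_normalizer_le_normalizer_inf
  rw [← normalizer_eq_top_iff, eq_top_iff, ← hsup]
  exact sup_le hN hK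

end Subgroup

theorem stmt1_general {G : Type*} [Group G] (K H : Subgroup G)
    (hmax : IsCoatom K) (hcf : K.normalCore = ⊥)
    (hHnormal : H.Normal) (hnil : Group.IsNilpotent ↥H)
    (hnt : H ≠ ⊥) :
    ((Subgroup.center ↥H).map H.subtype : Set G) * (K : Set G) = Set.univ ∧
      (Subgroup.center ↥H).map H.subtype ⊓ K = ⊥ := by
  set Z : Subgroup G := (Subgroup.center ↥H).map H.subtype
  have : Nontrivial H := H.nontrivial_iff_ne_bot.mpr hnt
  have hZ : Z ≠ ⊥ := by
    rw [Ne, Subgroup.map_eq_bot_iff_of_injective _ H.subtype_injective]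
    exact Group.IsNilpotent.center_ne_bot H
  have hsup := Subgroup.sup_eq_top_of_isCoatom_of_normalCore_eq_bot hmax hcf hZ
  refine ⟨by rw [← Subgroup.normal_mul, hsup, Subgroup.coe_top], ?_⟩
  have : (Z ⊓ K).Normal := Subgroup.normal_inf_of_sup_eq_top hsup
  exact Subgroup.eq_bot_of_le_of_normalCore_eq_bot hcf inf_le_right

theorem stmt1 {G : Type*} [Group G] [Finite G] (K H : Subgroup G)
    (hmax : IsCoatom K) (hcf : K.normalCore = ⊥)
    (hHnormal : H.Normal) (hnil : Group.IsNilpotent ↥H)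
    (hnt : H ≠ ⊥) (hns : ¬ H ≤ K) :
    ((Subgroup.center ↥H).map H.subtype : Set G) * (K : Set G) = Set.univ ∧
      (Subgroup.center ↥H).map H.subtype ⊓ K = ⊥ :=
  stmt1_general K H hmax hcf hHnormal hnil hnt
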